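/- arXiv:1802.04031 — 4 statements merged into one kernel-verified Lean document; each statement's English description precedes it below -/
import Mathlib

section
/- If kr/n is not an integer, i.e., kr/n > m where m = ⌊kr/n⌋, then the MSRR cross-rack repair bandwidth is strictly less than the MSR cross-rack repair bandwidth: B*d/(k*(d - m + 1)) < B*d*(n/r)/(k*(d*n/r + n/r - k)), assuming all denominators are positive. -/
/-!
Write `t = n / r` for the number of nodes per rack. The MSR denominator is
`d t + t - k = t (d - m + 1) - (k - m t)`, and `m t < k` exactly because `m < k r / n`.
So the MSR denominator is strictly below `t` times the MSRR one, and dividing `B d t / k`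
by the smaller positive quantity gives the larger bandwidth.
-/

lemma mul_div_lt_of_lt_mul_div {m k r n : ℝ} (hn : 0 < n) (hr : 0 < r) (h : m < k * r / n) :
    m * (n / r) < k := by
  rw [lt_div_iff₀ hn] at h
  rw [← mul_div_assoc, div_lt_iff₀ hr]
  exact h

lemma add_sub_lt_mul_sub_add_one {d t m k : ℝ} (h : m * t < k) :
    d * t + t - k < t * (d - m + 1) := by
  linarith

lemma div_mul_lt_mul_div_mul {a c t X Y : ℝ} (ha : 0 < a) (hc : 0 < c) (hX : 0 < X)
    (hY : 0 < Y) (h : Y < t * X) :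
    a / (c * X) < a * t / (c * Y) := by
  rw [div_lt_div_iff₀ (mul_pos hc hX) (mul_pos hc hY)]
  calc a * (c * Y) = (a * c) * Y := by ring
    _ < (a * c) * (t * X) := mul_lt_mul_of_pos_left h (mul_pos ha hc)
    _ = a * t * (c * X) := by ring

theorem msrr_lt_msr_general (n k r d B : ℝ) (m : ℤ)
    (hn : 0 < n) (hk : 0 < k) (hr : 0 < r) (hd : 0 < d) (hB : 0 < B)
    (hlt : (m : ℝ) < k * r / n)
    (hden1 : 0 < d * (n / r) + n / r - k) (hden2 : 0 < d - (m : ℝ) + 1) :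
    B * d / (k * (d - (m : ℝ) + 1)) <
      B * d * (n / r) / (k * (d * (n / r) + n / r - k)) :=
  div_mul_lt_mul_div_mul (mul_pos hB hd) hk hden2 hden1
    (add_sub_lt_mul_sub_add_one (mul_div_lt_of_lt_mul_div hn hr hlt))

/-- If `kr/n` is not an integer, i.e. `m = ⌊kr/n⌋ < kr/n`, then the MSRR
cross-rack repair bandwidth is strictly less than the MSR one. -/
theorem msrr_lt_msr (n k r d B : ℝ) (m : ℤ)
    (hn : 0 < n) (hk : 0 < k) (hr : 0 < r) (hd : 0 < d) (hB : 0 < B)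
    (hm : m = ⌊k * r / n⌋) (hlt : (m : ℝ) < k * r / n) (hdm : (m : ℝ) ≤ d)
    (hden1 : 0 < d * (n / r) + n / r - k) (hden2 : 0 < d - (m : ℝ) + 1) :
    B * d / (k * (d - (m : ℝ) + 1)) <
      B * d * (n / r) / (k * (d * (n / r) + n / r - k)) :=
  msrr_lt_msr_general n k r d B m hn hk hr hd hB hlt hden1 hden2
end

section
/- Suppose m = kr/n is an integer and k/n > 2/r. Then γ'_MBR - γ_MBRR > 0, where γ'_MBR = 2*B*d*n/(k*(2*d*n + 2*n - k*r - r)) and γ_MBRR = 2*B*d/(2*k*d - m*(m-1)); that is, MBRR codes have strictly less cross-rack repair bandwidth than MBR codes. -/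
/-!
Clearing denominators, the claim is that the MBR denominator `k (2dn + 2n - kr - r)` is smaller
than `n (2kd - m(m-1))`. Substituting `mn = kr`, `n` times the difference factors as
`k (n - r) (kr - 2n)`, which is positive because `r < n` and `kr > 2n`.
-/

lemma mul_mbrr_denom_sub_mbr_denom {n k r d m : ℝ} (hmn : m * n = k * r) :
    n * (n * (2 * k * d - m * (m - 1)) - k * (2 * d * n + 2 * n - k * r - r)) =
      k * (n - r) * (k * r - 2 * n) := by
  linear_combination (n - m * n - k * r) * hmn

lemma mbr_denom_lt_mul_mbrr_denom {n k r d m : ℝ} (hn : 0 < n) (hk : 0 < k) (hrn : r < n)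
    (hkr : 2 * n < k * r) (hmn : m * n = k * r) :
    k * (2 * d * n + 2 * n - k * r - r) < n * (2 * k * d - m * (m - 1)) := by
  have hgap : 0 < k * (n - r) * (k * r - 2 * n) :=
    mul_pos (mul_pos hk (sub_pos.mpr hrn)) (sub_pos.mpr hkr)
  rw [← mul_mbrr_denom_sub_mbr_denom hmn] at hgap
  exact sub_pos.mp (pos_of_mul_pos_right hgap hn.le)

theorem mbrr_lt_mbr_general (n k r d B : ℝ) (m : ℤ)
    (hn : 0 < n) (hk : 0 < k) (hr : 0 < r) (hd : 0 < d) (hB : 0 < B)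
    (hrn : r < n) (hm : (m : ℝ) = k * r / n)
    (hrate : k / n > 2 / r)
    (hden1 : 0 < k * (2 * d * n + 2 * n - k * r - r)) :
    2 * B * d * n / (k * (2 * d * n + 2 * n - k * r - r)) -
      2 * B * d / (2 * k * d - (m : ℝ) * ((m : ℝ) - 1)) > 0 := by
  have hkr : 2 * n < k * r := by
    rwa [gt_iff_lt, div_lt_div_iff₀ hr hn] at hrate
  have hmn : (m : ℝ) * n = k * r := by
    rw [hm, div_mul_cancel₀ _ hn.ne']
  rw [gt_iff_lt, sub_pos]
  calc 2 * B * d / (2 * k * d - (m : ℝ) * (m - 1))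
      = 2 * B * d * n / (n * (2 * k * d - (m : ℝ) * (m - 1))) := by
        rw [mul_comm n, mul_div_mul_right _ _ hn.ne']
    _ < 2 * B * d * n / (k * (2 * d * n + 2 * n - k * r - r)) :=
        div_lt_div_of_pos_left (by positivity) hden1
          (mbr_denom_lt_mul_mbrr_denom hn hk hrn hkr hmn)

/-- If `m = kr/n` is an integer and `k/n > 2/r`, then MBRR codes have
strictly less cross-rack repair bandwidth than MBR codes. -/
theorem mbrr_lt_mbr (n k r d B : ℝ) (m : ℤ)
    (hn : 0 < n) (hk : 0 < k) (hr : 0 < r) (hd : 0 < d) (hB : 0 < B)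
    (hrn : r < n) (hm : (m : ℝ) = k * r / n)
    (hrate : k / n > 2 / r)
    (hden1 : 0 < k * (2 * d * n + 2 * n - k * r - r))
    (hden2 : 0 < 2 * k * d - (m : ℝ) * ((m : ℝ) - 1)) :
    2 * B * d * n / (k * (2 * d * n + 2 * n - k * r - r)) -
      2 * B * d / (2 * k * d - (m : ℝ) * ((m : ℝ) - 1)) > 0 :=
  mbrr_lt_mbr_general n k r d B m hn hk hr hd hB hrn hm hrate hden1
end

section
/- With m = kr/n an integer, the difference γ'_MBR - γ_MBRR equals 2*B*d*k^2*r*(n - r)*(1/n - 2/(k*r)) / (k*(2*d*n + 2*n - k*r - r)*(2*k*d - m*(m-1))). Consequently γ'_MBR > γ_MBRR if and only if k/n > 2/r (given n > r and positive denominators). -/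
/-! Over the common denominator `A * C`, with `A = k (2dn + 2n - kr - r)` and
`C = 2kd - m (m - 1)`, the numerator is `2Bd (nC - A)`. Substituting `m = kr/n` factors
`nC - A` as `k² r (n - r) (1/n - 2/(kr))`. Every factor except the last is positive, and
`1/n - 2/(kr) = (k/n - 2/r)/k`, so the sign of the difference is the sign of `k/n - 2/r`. -/

lemma mbr_numerator_eq {n k r d m : ℝ} (hn : n ≠ 0) (hk : k ≠ 0) (hr : r ≠ 0)
    (hm : m = k * r / n) :
    n * (2 * k * d - m * (m - 1)) - k * (2 * d * n + 2 * n - k * r - r) =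
      k ^ 2 * r * (n - r) * (1 / n - 2 / (k * r)) := by
  subst hm
  field_simp
  ring

lemma one_div_sub_two_div_mul_pos_iff {n k r : ℝ} (hn : 0 < n) (hk : 0 < k) (hr : 0 < r) :
    0 < 1 / n - 2 / (k * r) ↔ 2 / r < k / n := by
  have hfactor : 1 / n - 2 / (k * r) = (k / n - 2 / r) / k := by
    field_simp
  rw [hfactor, div_pos_iff_of_pos_right hk, sub_pos]

/-- With `m = kr/n` an integer, the difference `γ'_MBR - γ_MBRR` equals the
closed form, and consequently `γ'_MBR > γ_MBRR ↔ k/n > 2/r`. -/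
theorem mbr_sub_mbrr (n k r d B : ℝ) (m : ℤ)
    (hn : 0 < n) (hk : 0 < k) (hr : 0 < r) (hd : 0 < d) (hB : 0 < B)
    (hrn : r < n) (hm : (m : ℝ) = k * r / n)
    (hden1 : 0 < k * (2 * d * n + 2 * n - k * r - r))
    (hden2 : 0 < 2 * k * d - (m : ℝ) * ((m : ℝ) - 1)) :
    (2 * B * d * n / (k * (2 * d * n + 2 * n - k * r - r)) -
        2 * B * d / (2 * k * d - (m : ℝ) * ((m : ℝ) - 1)) =
      2 * B * d * k ^ 2 * r * (n - r) * (1 / n - 2 / (k * r)) /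
        (k * (2 * d * n + 2 * n - k * r - r) *
          (2 * k * d - (m : ℝ) * ((m : ℝ) - 1)))) ∧
    (2 * B * d * n / (k * (2 * d * n + 2 * n - k * r - r)) >
        2 * B * d / (2 * k * d - (m : ℝ) * ((m : ℝ) - 1)) ↔
      k / n > 2 / r) := by
  have hdiff : 2 * B * d * n / (k * (2 * d * n + 2 * n - k * r - r)) -
        2 * B * d / (2 * k * d - (m : ℝ) * ((m : ℝ) - 1)) =
      2 * B * d * k ^ 2 * r * (n - r) * (1 / n - 2 / (k * r)) /
        (k * (2 * d * n + 2 * n - k * r - r) * (2 * k * d - (m : ℝ) * ((m : ℝ) - 1))) := by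
    rw [div_sub_div _ _ hden1.ne' hden2.ne']
    congr 1
    linear_combination (2 * B * d) * mbr_numerator_eq (d := d) hn.ne' hk.ne' hr.ne' hm
  refine ⟨hdiff, ?_⟩
  have hprefactor : 0 < 2 * B * d * k ^ 2 * r * (n - r) := by
    have := sub_pos.mpr hrn
    positivity
  rw [gt_iff_lt, ← sub_pos, hdiff, div_pos_iff_of_pos_right (mul_pos hden1 hden2),
    mul_pos_iff_of_pos_left hprefactor, one_div_sub_two_div_mul_pos_iff hn hk hr, gt_iff_lt]
end

section
/- The MBRR point satisfies the capacity equation with equality: with α = γ = B*d/((k-m)*d + m*(d - (m-1)/2)) and β = γ/d, we have k*α + Σ_{ℓ=1}^{m} min((d - ℓ + 1)*β - α, 0) = B, and moreover (d - ℓ + 1)*β - α ≤ 0 for every ℓ with 1 ≤ ℓ ≤ m. -/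
/-!
Writing `α = d β`, the `ℓ`-th min term is `min ((1 - ℓ) β) 0 = (1 - ℓ) β` because `β ≥ 0`.
Summing, `k α + Σ_{ℓ=1}^m (1 - ℓ) β = (k d - m (m - 1) / 2) β`, and the coefficient is exactly the
denominator defining `α`, so the total is `B`.
-/

open Finset

lemma sum_Icc_one_sub_natCast (m : ℕ) :
    ∑ ℓ ∈ Icc 1 m, (1 - (ℓ : ℝ)) = -((m : ℝ) * (m - 1) / 2) := by
  induction m with
  | zero => simp
  | succ n ih =>
    rw [sum_Icc_succ_top (by omega), ih]
    push_cast
    ring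

section Capacity

variable {d β : ℝ} (hβ : 0 ≤ β)
include hβ

lemma capacity_term_nonpos {ℓ : ℕ} (hℓ : 1 ≤ ℓ) : (d - ℓ + 1) * β - d * β ≤ 0 := by
  have : (1 : ℝ) ≤ ℓ := by exact_mod_cast hℓ
  nlinarith

lemma capacity_sum_eq (k m : ℕ) :
    k * (d * β) + ∑ ℓ ∈ Icc 1 m, min ((d - ℓ + 1) * β - d * β) 0 =
      ((k - m) * d + m * (d - (m - 1) / 2)) * β := by
  have hmin : ∀ ℓ ∈ Icc 1 m, min ((d - ℓ + 1) * β - d * β) 0 = (1 - (ℓ : ℝ)) * β :=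
    fun ℓ hℓ => by
      rw [min_eq_left (capacity_term_nonpos hβ (mem_Icc.mp hℓ).1)]
      ring
  rw [sum_congr rfl hmin, ← sum_mul, sum_Icc_one_sub_natCast]
  ring

end Capacity

theorem mbrr_capacity_eq_general (B : ℝ) (k d m : ℕ) (α β : ℝ)
    (hB : 0 < B) (hd : 0 < d)
    (hden : 0 < ((k : ℝ) - m) * d + m * ((d : ℝ) - ((m : ℝ) - 1) / 2))
    (hα : α = B * d / (((k : ℝ) - m) * d + m * ((d : ℝ) - ((m : ℝ) - 1) / 2)))
    (hβ : β = α / d) :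
    ((k : ℝ) * α +
        ∑ ℓ ∈ Finset.Icc 1 m, min (((d : ℝ) - (ℓ : ℝ) + 1) * β - α) 0 = B) ∧
    ∀ ℓ ∈ Finset.Icc 1 m, ((d : ℝ) - (ℓ : ℝ) + 1) * β - α ≤ 0 := by
  set den := ((k : ℝ) - m) * d + m * ((d : ℝ) - ((m : ℝ) - 1) / 2)
  have hd' : (d : ℝ) ≠ 0 := by positivity
  have hβB : β = B / den := by
    rw [hβ, hα]
    field_simp
  have hαβ : α = d * β := by
    rw [hβ]
    field_simp
  have hβ0 : 0 ≤ β := by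
    rw [hβB]
    positivity
  rw [hαβ]
  refine ⟨?_, fun ℓ hℓ => capacity_term_nonpos hβ0 (mem_Icc.mp hℓ).1⟩
  rw [capacity_sum_eq hβ0, hβB]
  exact mul_div_cancel₀ B hden.ne'

/-- The MBRR point satisfies the capacity equation with equality, and every
min term is nonpositive there. -/
theorem mbrr_capacity_eq (B : ℝ) (k d m : ℕ) (α β : ℝ)
    (hB : 0 < B) (hk : 0 < k) (hd : 0 < d) (hm : 0 < m)
    (hkm : m ≤ k) (hdm : m ≤ d)
    (hden : 0 < ((k : ℝ) - m) * d + m * ((d : ℝ) - ((m : ℝ) - 1) / 2))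
    (hα : α = B * d / (((k : ℝ) - m) * d + m * ((d : ℝ) - ((m : ℝ) - 1) / 2)))
    (hβ : β = α / d) :
    ((k : ℝ) * α +
        ∑ ℓ ∈ Finset.Icc 1 m, min (((d : ℝ) - (ℓ : ℝ) + 1) * β - α) 0 = B) ∧
    ∀ ℓ ∈ Finset.Icc 1 m, ((d : ℝ) - (ℓ : ℝ) + 1) * β - α ≤ 0 :=
  mbrr_capacity_eq_general B k d m α β hB hd hden hα hβ
end
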